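/- arXiv:1606.01869 — 2 statements merged into one kernel-verified Lean document; each statement's English description precedes it below -/
import Mathlib

section
/- Let B ∈ ℝ^{r×r} be symmetric positive semidefinite, let D ∈ ℝ^{n×n} be diagonal with diagonal entries d_1,…,d_n, and let Z be the membership matrix of a partition of {1,…,n} into r clusters each of size n/r. Then λ_r(D Z B Zᵀ D) ≥ (n/r)·λ_min(B)·min_{1≤i≤n} d_i². -/
/-! By the easy half of the Courant–Fischer theorem, `λ_r(M) ≥ c` as soon as
`xᵀ M x ≥ c ‖x‖²` on an `r`-dimensional subspace. If every `d_i ≠ 0`, take the subspace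
`D⁻¹ Z ℝʳ`: since `Zᵀ Z = (n/r) I`, a vector `x = D⁻¹ Z v` satisfies
`xᵀ M x = (n/r)² vᵀ B v ≥ (n/r)² λ_min(B) ‖v‖²` and
`min_i d_i² ‖x‖² ≤ ‖D x‖² = ‖Z v‖² = (n/r) ‖v‖²`.
If some `d_i = 0`, the bound is `0` and `M` is positive semidefinite. -/

open Matrix

/-- The eigenvalues of a Hermitian matrix, listed in nonincreasing order:
`eigDesc hM i` is the `(i+1)`-th largest eigenvalue of `M`. -/
noncomputable def eigDesc {n : ℕ} {M : Matrix (Fin n) (Fin n) ℝ} (hM : M.IsHermitian)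
    (i : Fin n) : ℝ :=
  hM.eigenvalues (Tuple.sort hM.eigenvalues i.rev)

open Finset Module

namespace Matrix.IsHermitian

variable {ι : Type*} [Fintype ι] [DecidableEq ι] {A : Matrix ι ι ℝ} (hA : A.IsHermitian)

noncomputable def eigenCoords (x : ι → ℝ) : ι → ℝ :=
  (hA.eigenvectorUnitary : Matrix ι ι ℝ)ᵀ *ᵥ x

lemma dotProduct_self_eq_sum_eigenCoords_sq (x : ι → ℝ) :
    x ⬝ᵥ x = ∑ i, hA.eigenCoords x i ^ 2 := by
  set U : Matrix ι ι ℝ := (hA.eigenvectorUnitary : Matrix ι ι ℝ)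
  have hU : U * Uᵀ = 1 := mem_unitaryGroup_iff.mp hA.eigenvectorUnitary.2
  calc x ⬝ᵥ x = x ⬝ᵥ (U * Uᵀ) *ᵥ x := by rw [hU, one_mulVec]
    _ = ∑ i, hA.eigenCoords x i ^ 2 := by
      rw [← mulVec_mulVec, dotProduct_mulVec, ← mulVec_transpose]
      simp [eigenCoords, U, dotProduct, sq]

lemma dotProduct_mulVec_eq_sum_eigenvalues (x : ι → ℝ) :
    x ⬝ᵥ A *ᵥ x = ∑ i, hA.eigenvalues i * hA.eigenCoords x i ^ 2 := by
  set U : Matrix ι ι ℝ := (hA.eigenvectorUnitary : Matrix ι ι ℝ)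
  have hA' : A = U * diagonal hA.eigenvalues * Uᵀ := by
    simpa [U, star_eq_conjTranspose] using hA.spectral_theorem
  conv_lhs => rw [hA']
  rw [← mulVec_mulVec, ← mulVec_mulVec, dotProduct_mulVec, ← mulVec_transpose]
  simp only [dotProduct, mulVec_diagonal, eigenCoords, U]
  exact Finset.sum_congr rfl fun i _ => by ring

lemma iInf_eigenvalues_mul_dotProduct_self_le (x : ι → ℝ) :
    (⨅ i, hA.eigenvalues i) * (x ⬝ᵥ x) ≤ x ⬝ᵥ A *ᵥ x := by
  rw [hA.dotProduct_mulVec_eq_sum_eigenvalues, hA.dotProduct_self_eq_sum_eigenCoords_sq, mul_sum]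
  exact sum_le_sum fun i _ => mul_le_mul_of_nonneg_right
    (ciInf_le (Set.finite_range _).bddBelow i) (sq_nonneg _)

lemma dotProduct_mulVec_lt_of_eigenCoords_eq_zero {c : ℝ} {x : ι → ℝ} (hx : x ≠ 0)
    (hcoords : ∀ i, c ≤ hA.eigenvalues i → hA.eigenCoords x i = 0) :
    x ⬝ᵥ A *ᵥ x < c * (x ⬝ᵥ x) := by
  rw [hA.dotProduct_mulVec_eq_sum_eigenvalues, hA.dotProduct_self_eq_sum_eigenCoords_sq, mul_sum]
  have hsum : ∑ i, hA.eigenCoords x i ^ 2 ≠ 0 := by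
    rw [← hA.dotProduct_self_eq_sum_eigenCoords_sq]
    exact mt dotProduct_self_eq_zero.mp hx
  obtain ⟨i₀, -, hi₀⟩ := exists_ne_zero_of_sum_ne_zero hsum
  have hlt : ∀ i, hA.eigenCoords x i ≠ 0 → hA.eigenvalues i < c := fun i hi =>
    lt_of_not_ge fun h => hi (hcoords i h)
  refine sum_lt_sum (fun i _ => ?_) ⟨i₀, mem_univ _, ?_⟩
  · by_cases hi : hA.eigenCoords x i = 0
    · simp [hi]
    · exact mul_le_mul_of_nonneg_right (hlt i hi).le (sq_nonneg _)
  · exact mul_lt_mul_of_pos_right (hlt i₀ (pow_ne_zero_iff two_ne_zero |>.mp hi₀))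
      (lt_of_le_of_ne (sq_nonneg _) hi₀.symm)

end Matrix.IsHermitian

section EigDesc

variable {n : ℕ} {A : Matrix (Fin n) (Fin n) ℝ}

lemma eigDesc_antitone (hA : A.IsHermitian) : Antitone (eigDesc hA) :=
  (Tuple.monotone_sort hA.eigenvalues).comp_antitone Fin.rev_anti

lemma card_le_of_eigDesc_lt (hA : A.IsHermitian) {k : Fin n} {c : ℝ} (hk : eigDesc hA k < c) :
    #{i | c ≤ hA.eigenvalues i} ≤ k := by
  let σ : Equiv.Perm (Fin n) := Fin.revPerm.trans (Tuple.sort hA.eigenvalues)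
  have hσ : ∀ j, eigDesc hA j = hA.eigenvalues (σ j) := fun _ => rfl
  rw [← Fin.card_Iio k]
  refine card_le_card_of_injOn σ.symm (fun i hi => ?_) σ.symm.injective.injOn
  simp only [coe_filter, mem_univ, true_and, Set.mem_ofPred_eq] at hi
  simp only [coe_Iio, Set.mem_Iio]
  by_contra! hle
  have := eigDesc_antitone hA hle
  rw [hσ, σ.apply_symm_apply] at this
  linarith

theorem le_eigDesc_of_forall_mem (hA : A.IsHermitian) (k : Fin n)
    (V : Submodule ℝ (Fin n → ℝ)) (hV : (k : ℕ) < finrank ℝ V) {c : ℝ}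
    (hc : ∀ x ∈ V, c * (x ⬝ᵥ x) ≤ x ⬝ᵥ A *ᵥ x) : c ≤ eigDesc hA k := by
  by_contra! hk
  -- at most `k` eigenvalues reach `c`, so some nonzero `x ∈ V` has no component along them
  let S : Finset (Fin n) := {i | c ≤ hA.eigenvalues i}
  let f : V →ₗ[ℝ] (S → ℝ) := LinearMap.funLeft ℝ ℝ Subtype.val ∘ₗ
    (hA.eigenvectorUnitary : Matrix (Fin n) (Fin n) ℝ)ᵀ.mulVecLin ∘ₗ V.subtype
  have hf : finrank ℝ (S → ℝ) < finrank ℝ V := by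
    simpa using (card_le_of_eigDesc_lt hA hk).trans_lt hV
  obtain ⟨x, hker, hx⟩ := (Submodule.ne_bot_iff _).mp (LinearMap.ker_ne_bot_of_finrank_lt hf)
  have hcoords : ∀ i, c ≤ hA.eigenvalues i → hA.eigenCoords x i = 0 := fun i hi =>
    congrFun (LinearMap.mem_ker.mp hker : f x = 0) ⟨i, by simpa [S] using hi⟩
  exact (hc x x.2).not_gt
    (hA.dotProduct_mulVec_lt_of_eigenCoords_eq_zero (by simpa using hx) hcoords)

end EigDesc

lemma Matrix.dotProduct_transpose_mul_mul_mulVec {m ι : Type*} [Fintype m] [Fintype ι]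
    (P : Matrix m ι ℝ) (B : Matrix m m ℝ) (x : ι → ℝ) :
    x ⬝ᵥ (Pᵀ * B * P) *ᵥ x = (P *ᵥ x) ⬝ᵥ B *ᵥ (P *ᵥ x) := by
  rw [← mulVec_mulVec, ← mulVec_mulVec, dotProduct_mulVec, vecMul_transpose]

lemma iInf_sq_mul_dotProduct_self_le {ι : Type*} [Fintype ι] [DecidableEq ι] (d x : ι → ℝ) :
    (⨅ i, d i ^ 2) * (x ⬝ᵥ x) ≤ (diagonal d *ᵥ x) ⬝ᵥ (diagonal d *ᵥ x) := by
  simp only [dotProduct, mulVec_diagonal, mul_sum]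
  refine sum_le_sum fun i _ => ?_
  calc (⨅ j, d j ^ 2) * (x i * x i) ≤ d i ^ 2 * (x i * x i) :=
        mul_le_mul_of_nonneg_right (ciInf_le (Set.finite_range _).bddBelow i)
          (mul_self_nonneg _)
    _ = d i * x i * (d i * x i) := by ring

section Membership

variable {ι κ : Type*} [DecidableEq κ]

def membershipMatrix (z : ι → κ) : Matrix ι κ ℝ :=
  of fun i k => if z i = k then 1 else 0

lemma membershipMatrix_mulVec [Fintype κ] (z : ι → κ) (v : κ → ℝ) :
    membershipMatrix z *ᵥ v = v ∘ z := by
  ext i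
  simp [membershipMatrix, mulVec, dotProduct]

lemma membershipMatrix_mulVec_injective [Fintype κ] {z : ι → κ} (hz : Function.Surjective z) :
    Function.Injective (membershipMatrix z *ᵥ ·) := fun v w h =>
  hz.injective_comp_right (by simpa only [membershipMatrix_mulVec] using h)

lemma membershipMatrix_transpose_mulVec_comp [Fintype ι] (z : ι → κ) (w : κ → ℝ) :
    (membershipMatrix z)ᵀ *ᵥ (w ∘ z) = fun k => #{i | z i = k} * w k := by
  ext k
  simp only [membershipMatrix, mulVec, dotProduct, transpose_apply, of_apply, ite_mul, one_mul,
    zero_mul, Function.comp_apply]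
  rw [← sum_filter, sum_congr rfl fun i hi => by rw [(mem_filter.mp hi).2], sum_const,
    nsmul_eq_mul]

variable [Fintype ι] [Fintype κ] {z : ι → κ} {s : ℕ}

lemma membershipMatrix_transpose_mulVec_mulVec (hz : ∀ k, #{i | z i = k} = s) (v : κ → ℝ) :
    (membershipMatrix z)ᵀ *ᵥ (membershipMatrix z *ᵥ v) = (s : ℝ) • v := by
  ext k
  simp [membershipMatrix_mulVec, membershipMatrix_transpose_mulVec_comp, hz]

lemma membershipMatrix_mulVec_dotProduct_self (hz : ∀ k, #{i | z i = k} = s) (v : κ → ℝ) :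
    (membershipMatrix z *ᵥ v) ⬝ᵥ (membershipMatrix z *ᵥ v) = s * (v ⬝ᵥ v) := by
  rw [dotProduct_mulVec, ← mulVec_transpose, membershipMatrix_transpose_mulVec_mulVec hz,
    smul_dotProduct, smul_eq_mul]

end Membership

lemma Matrix.diagonal_mul_diagonal_inv {ι : Type*} [Fintype ι] [DecidableEq ι] {d : ι → ℝ}
    (hd : ∀ i, d i ≠ 0) : diagonal d * diagonal d⁻¹ = 1 := by
  rw [diagonal_mul_diagonal, ← diagonal_one]
  exact congrArg diagonal (funext fun i => mul_inv_cancel₀ (hd i))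

lemma Matrix.diagonal_mul_mul_transpose_mul_diagonal_eq {ι κ : Type*} [Fintype ι] [Fintype κ]
    [DecidableEq ι] (d : ι → ℝ) (Z : Matrix ι κ ℝ) (B : Matrix κ κ ℝ) :
    diagonal d * Z * B * Zᵀ * diagonal d = (Zᵀ * diagonal d)ᵀ * B * (Zᵀ * diagonal d) := by
  simp [transpose_mul, Matrix.mul_assoc]

lemma Matrix.PosSemidef.diagonal_mul_mul_transpose_mul_diagonal {ι κ : Type*} [Fintype ι]
    [Fintype κ] [DecidableEq ι] {B : Matrix κ κ ℝ} (hB : B.PosSemidef) (d : ι → ℝ)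
    (Z : Matrix ι κ ℝ) : (diagonal d * Z * B * Zᵀ * diagonal d).PosSemidef := by
  rw [diagonal_mul_mul_transpose_mul_diagonal_eq, ← conjTranspose_eq_transpose_of_trivial]
  exact hB.conjTranspose_mul_mul_same _

lemma Matrix.PosSemidef.eigDesc_nonneg {n : ℕ} {A : Matrix (Fin n) (Fin n) ℝ}
    (hA : A.PosSemidef) (k : Fin n) : 0 ≤ eigDesc hA.1 k :=
  hA.eigenvalues_nonneg _

lemma mul_iInf_mul_dotProduct_self_le {ι κ : Type*} [Fintype ι] [Fintype κ] [DecidableEq ι]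
    [DecidableEq κ] {z : ι → κ} {s : ℕ} (hz : ∀ k, #{i | z i = k} = s) {B : Matrix κ κ ℝ}
    (hB : B.PosSemidef) (d : ι → ℝ) {x : ι → ℝ} {v : κ → ℝ}
    (hx : diagonal d *ᵥ x = membershipMatrix z *ᵥ v) :
    s * (⨅ k, hB.1.eigenvalues k) * (⨅ i, d i ^ 2) * (x ⬝ᵥ x) ≤
      x ⬝ᵥ (diagonal d * membershipMatrix z * B * (membershipMatrix z)ᵀ * diagonal d) *ᵥ x := by
  set Z := membershipMatrix z
  set lB := ⨅ k, hB.1.eigenvalues k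
  set md := ⨅ i, d i ^ 2
  have hquad : x ⬝ᵥ (diagonal d * Z * B * Zᵀ * diagonal d) *ᵥ x = s ^ 2 * (v ⬝ᵥ B *ᵥ v) := by
    rw [diagonal_mul_mul_transpose_mul_diagonal_eq, dotProduct_transpose_mul_mul_mulVec,
      ← mulVec_mulVec, hx, membershipMatrix_transpose_mulVec_mulVec hz, mulVec_smul,
      smul_dotProduct, dotProduct_smul, smul_eq_mul, smul_eq_mul]
    ring
  have hnorm : md * (x ⬝ᵥ x) ≤ s * (v ⬝ᵥ v) := by
    have := iInf_sq_mul_dotProduct_self_le d x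
    rwa [hx, membershipMatrix_mulVec_dotProduct_self hz] at this
  have hlB : 0 ≤ lB := Real.iInf_nonneg hB.eigenvalues_nonneg
  calc s * lB * md * (x ⬝ᵥ x) = s * lB * (md * (x ⬝ᵥ x)) := by ring
    _ ≤ s * lB * (s * (v ⬝ᵥ v)) := by gcongr
    _ = s ^ 2 * (lB * (v ⬝ᵥ v)) := by ring
    _ ≤ s ^ 2 * (v ⬝ᵥ B *ᵥ v) := by
      gcongr
      exact hB.1.iInf_eigenvalues_mul_dotProduct_self_le v
    _ = _ := hquad.symm

/-- if `B` is a symmetric positive semidefinite `r × r` matrix, `D` is an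
`n × n` diagonal matrix with diagonal entries `d_1, …, d_n`, and `Z` is the membership matrix
of a partition of `{1,…,n}` into `r` clusters each of size `n/r`, then
`λ_r (D Z B Zᵀ D) ≥ (n/r) · λ_min(B) · min_i d_i²`. -/
theorem stmt_3 (n r : ℕ) (hr : 0 < r) (hrn : r ≤ n) (hdvd : r ∣ n)
    (z : Fin n → Fin r)
    (hsize : ∀ k : Fin r, (Finset.univ.filter fun i => z i = k).card = n / r)
    (Z : Matrix (Fin n) (Fin r) ℝ)
    (hZ : Z = Matrix.of (fun i k => if z i = k then (1 : ℝ) else 0))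
    (B : Matrix (Fin r) (Fin r) ℝ) (hB : B.PosSemidef)
    (d : Fin n → ℝ)
    (M : Matrix (Fin n) (Fin n) ℝ)
    (hM : M = Matrix.diagonal d * Z * B * Zᵀ * Matrix.diagonal d)
    (hHerm : M.IsHermitian) :
    (n : ℝ) / r * (⨅ k, hB.1.eigenvalues k) * (⨅ i, (d i) ^ 2) ≤
      eigDesc hHerm ⟨r - 1, by omega⟩ := by
  change Z = membershipMatrix z at hZ
  subst hZ hM
  rw [← Nat.cast_div hdvd (by exact_mod_cast hr.ne')]
  by_cases hd : ∀ i, d i ≠ 0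
  · let L := (diagonal d⁻¹ * membershipMatrix z).mulVecLin
    have hDL : ∀ v, diagonal d *ᵥ L v = membershipMatrix z *ᵥ v := fun v => by
      rw [mulVecLin_apply, mulVec_mulVec, ← Matrix.mul_assoc, diagonal_mul_diagonal_inv hd,
        Matrix.one_mul]
    have hz : Function.Surjective z := fun k => by
      obtain ⟨i, hi⟩ := card_pos.mp ((hsize k).symm ▸ Nat.div_pos hrn hr)
      exact ⟨i, (mem_filter.mp hi).2⟩
    have hL : Function.Injective L := fun v w h =>
      membershipMatrix_mulVec_injective hz (by simp only [← hDL, h])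
    refine le_eigDesc_of_forall_mem hHerm _ (LinearMap.range L) ?_ ?_
    · rw [LinearMap.finrank_range_of_inj hL, finrank_fin_fun]
      exact Nat.sub_lt hr one_pos
    · rintro _ ⟨v, rfl⟩
      exact mul_iInf_mul_dotProduct_self_le hsize hB d (hDL v)
  · obtain ⟨i, hi⟩ := not_forall_not.mp hd
    have hmin : ⨅ i, d i ^ 2 = 0 := le_antisymm
      ((ciInf_le (Set.finite_range fun i => d i ^ 2).bddBelow i).trans_eq (by simp [hi]))
      (Real.iInf_nonneg fun _ => sq_nonneg _)
    rw [hmin, mul_zero]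
    exact (hB.diagonal_mul_mul_transpose_mul_diagonal d _).eigDesc_nonneg _
end

section
/- If X̂ is SDP-1-feasible, then ⟨K̃, X₀ − X̂⟩ ≥ γ_min · Σ_{k=1}^{r} Σ_{i ∈ C̃_k} Σ_{j ∈ C̃_k} (1 − X̂_{ij}). -/
open Matrix

/-- The trace inner product of two matrices: `⟨A, B⟩ = trace(Aᵀ B)`. -/
def mInner {n : ℕ} (A B : Matrix (Fin n) (Fin n) ℝ) : ℝ := Matrix.trace (Aᵀ * B)

/-- A matrix `X ∈ ℝ^{n×n}` is SDP-1-feasible if it is symmetric positive semidefinite,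
entrywise nonnegative, has all row sums equal to `n/r`, and has unit diagonal. -/
def SDPFeasible (n r : ℕ) (X : Matrix (Fin n) (Fin n) ℝ) : Prop :=
  X.PosSemidef ∧ (∀ i j, 0 ≤ X i j) ∧ (∀ i, ∑ j, X i j = (n : ℝ) / r) ∧ (∀ i, X i i = 1)

/-- The population kernel matrix: `K̃_{ij} = f(d_{kℓ}² + σ_k² + σ_ℓ²)` for `i ∈ C̃_k`,
`j ∈ C̃_ℓ`, `i ≠ j`, and `K̃_{ii} = f(0)`, where `d_{kℓ}² = ‖μ_k − μ_ℓ‖²`. -/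
noncomputable def popKernel (n r p : ℕ) (z : Fin n → Fin r) (f : ℝ → ℝ)
    (μ : Fin r → Fin p → ℝ) (σ : Fin r → ℝ) : Matrix (Fin n) (Fin n) ℝ :=
  Matrix.of fun i j => if i = j then f 0 else
    f ((∑ t, (μ (z i) t - μ (z j) t) ^ 2) + (σ (z i)) ^ 2 + (σ (z j)) ^ 2)

/-- `γ_min = min_{k ≠ ℓ} [f(2σ_k²) − f(d_{kℓ}² + σ_k² + σ_ℓ²)]`. -/
noncomputable def gammaMin (r p : ℕ) (f : ℝ → ℝ) (μ : Fin r → Fin p → ℝ)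
    (σ : Fin r → ℝ) : ℝ :=
  ⨅ q : {q : Fin r × Fin r // q.1 ≠ q.2},
    (f (2 * (σ q.1.1) ^ 2) -
      f ((∑ t, (μ q.1.1 t - μ q.1.2 t) ^ 2) + (σ q.1.1) ^ 2 + (σ q.1.2) ^ 2))

lemma mInner_eq {n : ℕ} (A B : Matrix (Fin n) (Fin n) ℝ) :
    mInner A B = ∑ i, ∑ j, A i j * B i j := by
  simp [mInner, Matrix.trace, Matrix.mul_apply, Matrix.diag]
  exact Finset.sum_comm

/-- if `X̂` is SDP-1-feasible, then
`⟨K̃, X₀ − X̂⟩ ≥ γ_min · Σ_{k=1}^{r} Σ_{i ∈ C̃_k} Σ_{j ∈ C̃_k} (1 − X̂_{ij})`. -/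
theorem stmt_5 (n r p : ℕ) (hr : 2 ≤ r) (hdvd : r ∣ n)
    (z : Fin n → Fin r)
    (hsize : ∀ k : Fin r, (Finset.univ.filter fun i => z i = k).card = n / r)
    (Z : Matrix (Fin n) (Fin r) ℝ)
    (hZ : Z = Matrix.of (fun i k => if z i = k then (1 : ℝ) else 0))
    (X₀ : Matrix (Fin n) (Fin n) ℝ) (hX₀ : X₀ = Z * Zᵀ)
    (f : ℝ → ℝ) (μ : Fin r → Fin p → ℝ) (σ : Fin r → ℝ)
    (Xh : Matrix (Fin n) (Fin n) ℝ) (hfeas : SDPFeasible n r Xh) :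
    gammaMin r p f μ σ *
        ∑ k : Fin r, ∑ i ∈ Finset.univ.filter (fun i => z i = k),
          ∑ j ∈ Finset.univ.filter (fun j => z j = k), (1 - Xh i j) ≤
      mInner (popKernel n r p z f μ σ) (X₀ - Xh) := by
  obtain ⟨hpsd, hnn, hrow, hdiag⟩ := hfeas
  have hr0 : (r : ℝ) ≠ 0 := by
    have : 0 < r := lt_of_lt_of_le (by norm_num) hr
    exact_mod_cast this.ne'
  set K := popKernel n r p z f μ σ with hK
  set γ := gammaMin r p f μ σ with hγ
  have hγle : ∀ k ℓ : Fin r, k ≠ ℓ →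
      γ ≤ f (2 * σ k ^ 2) - f ((∑ t, (μ k t - μ ℓ t) ^ 2) + σ k ^ 2 + σ ℓ ^ 2) := by
    intro k ℓ h
    rw [hγ, gammaMin]
    exact ciInf_le (Finite.bddBelow_range _) (⟨(k, ℓ), h⟩ : {q : Fin r × Fin r // q.1 ≠ q.2})
  have hX0 : ∀ i j, X₀ i j = if z i = z j then (1 : ℝ) else 0 := by
    intro i j
    simp [hX₀, hZ, Matrix.mul_apply, Matrix.transpose_apply, ite_and, Finset.sum_ite_eq]
  have hcard : ∀ i : Fin n,
      ((Finset.univ.filter fun j => z j = z i).card : ℝ) = (n : ℝ) / r := by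
    intro i; rw [hsize (z i), Nat.cast_div hdvd hr0]
  -- row identity
  have hW : ∀ i, (∑ j ∈ Finset.univ.filter fun j => z j = z i, (1 - Xh i j))
      = ∑ j ∈ Finset.univ.filter fun j => ¬ z j = z i, Xh i j := by
    intro i
    have h1 : (∑ j ∈ Finset.univ.filter fun j => z j = z i, (1 - Xh i j))
        = (n : ℝ) / r - ∑ j ∈ Finset.univ.filter fun j => z j = z i, Xh i j := by
      rw [Finset.sum_sub_distrib, Finset.sum_const, nsmul_eq_mul, mul_one, hcard i]
    have h2 := Finset.sum_filter_add_sum_filter_not Finset.univ (fun j => z j = z i)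
      (fun j => Xh i j)
    rw [hrow i] at h2
    linarith
  -- regroup the double sum
  have hregroup : (∑ k : Fin r, ∑ i ∈ Finset.univ.filter (fun i => z i = k),
        ∑ j ∈ Finset.univ.filter (fun j => z j = k), (1 - Xh i j))
      = ∑ i, ∑ j ∈ Finset.univ.filter (fun j => z j = z i), (1 - Xh i j) := by
    rw [← Finset.sum_fiberwise Finset.univ z
      (fun i => ∑ j ∈ Finset.univ.filter (fun j => z j = z i), (1 - Xh i j))]
    refine Finset.sum_congr rfl fun k _ => Finset.sum_congr rfl fun i hi => ?_
    simp only [Finset.mem_filter] at hi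
    rw [hi.2]
  rw [mInner_eq, hregroup, Finset.mul_sum]
  apply Finset.sum_le_sum
  intro i _
  rw [← Finset.sum_filter_add_sum_filter_not Finset.univ (fun j => z j = z i)
    (fun j => K i j * ((X₀ - Xh) i j))]
  have hwithin : (∑ j ∈ Finset.univ.filter fun j => z j = z i, K i j * ((X₀ - Xh) i j))
      = f (2 * σ (z i) ^ 2) * ∑ j ∈ Finset.univ.filter fun j => z j = z i, (1 - Xh i j) := by
    rw [Finset.mul_sum]
    refine Finset.sum_congr rfl fun j hj => ?_
    simp only [Finset.mem_filter] at hj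
    rw [Matrix.sub_apply, hX0 i j, if_pos hj.2.symm]
    by_cases hij : i = j
    · subst hij; rw [hdiag]; ring
    · have harg : (∑ t, (μ (z i) t - μ (z j) t) ^ 2) + σ (z i) ^ 2 + σ (z j) ^ 2
          = 2 * σ (z i) ^ 2 := by
        rw [hj.2]; simp; ring
      have hKv : K i j = f (2 * σ (z i) ^ 2) := by
        rw [hK]; show (if i = j then f 0 else _) = _
        rw [if_neg hij, harg]
      rw [hKv]
  rw [hwithin, hW i]
  have hbetween : (∑ j ∈ Finset.univ.filter fun j => ¬ z j = z i, K i j * ((X₀ - Xh) i j))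
      = ∑ j ∈ Finset.univ.filter fun j => ¬ z j = z i, -(K i j * Xh i j) := by
    refine Finset.sum_congr rfl fun j hj => ?_
    simp only [Finset.mem_filter] at hj
    rw [Matrix.sub_apply, hX0 i j, if_neg fun h => hj.2 h.symm]
    ring
  rw [hbetween]
  rw [Finset.mul_sum, Finset.mul_sum, ← Finset.sum_add_distrib]
  apply Finset.sum_le_sum
  intro j hj
  simp only [Finset.mem_filter] at hj
  have hij : i ≠ j := fun h => hj.2 (by rw [h])
  have hKv : K i j = f ((∑ t, (μ (z i) t - μ (z j) t) ^ 2) + σ (z i) ^ 2 + σ (z j) ^ 2) := by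
    rw [hK]; show (if i = j then f 0 else _) = _
    rw [if_neg hij]
  have hb := hγle (z i) (z j) (fun h => hj.2 h.symm)
  have := mul_le_mul_of_nonneg_right hb (hnn i j)
  rw [hKv]
  nlinarith [hnn i j]
end
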